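/- The λ-term T = λν λf ((ν)(T₁)νf)(λx x), where T₁ = λn((n)δ)G with G = λx λy (x)λz(y)(s̲)z and δ = λf(f)0̲, has type ∀x{N^⊥[x] → ¬¬N[x]} in AF2_⊥, even though its normal form contains occurrences of ν applied to different numbers of arguments, so that it is not typable with ν : N*[x]. -/
import Mathlib

/- Untyped λ-calculus with de Bruijn indices, head reduction, Church numerals. -/

inductive Lam : Type
  | var : ℕ → Lam
  | app : Lam → Lam → Lam
  | lam : Lam → Lam
deriving DecidableEq, Repr

namespace Lam

/-- Shift free variables `≥ c` up by 1. -/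
def lift (c : ℕ) : Lam → Lam
  | var n => if n < c then var n else var (n + 1)
  | app s t => app (s.lift c) (t.lift c)
  | lam t => lam (t.lift (c + 1))

/-- Push a substitution under a binder. -/
def up (σ : ℕ → Lam) : ℕ → Lam
  | 0 => var 0
  | n + 1 => (σ n).lift 0

/-- Capture-avoiding simultaneous substitution. -/
def subst (σ : ℕ → Lam) : Lam → Lam
  | var n => σ n
  | app s t => app (s.subst σ) (t.subst σ)
  | lam t => lam (t.subst (up σ))

/-- `t.subst0 u` is `t[u/0]`, the β-contractum substitution. -/
def subst0 (t u : Lam) : Lam :=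
  t.subst (fun n => match n with | 0 => u | n + 1 => var n)

/-- `m` occurs free in the term. -/
def FreeIn (m : ℕ) : Lam → Prop
  | var n => n = m
  | app s t => s.FreeIn m ∨ t.FreeIn m
  | lam t => t.FreeIn (m + 1)

/-- A closed λ-term. -/
def Closed (t : Lam) : Prop := ∀ m, ¬ t.FreeIn m

end Lam

/-- One-step β-reduction (anywhere in the term). -/
inductive Beta : Lam → Lam → Prop
  | beta (t u) : Beta (.app (.lam t) u) (t.subst0 u)
  | appL {s s'} (t) : Beta s s' → Beta (.app s t) (.app s' t)
  | appR {t t'} (s) : Beta t t' → Beta (.app s t) (.app s t')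
  | lam {t t'} : Beta t t' → Beta (.lam t) (.lam t')

/-- β-equivalence `≃β`. -/
def BetaEq : Lam → Lam → Prop := Relation.EqvGen Beta

/-- A term in (β-)normal form. -/
def NormalForm (t : Lam) : Prop := ∀ u, ¬ Beta t u

/-- One step of head reduction: reduce the head redex. -/
inductive HStep : Lam → Lam → Prop
  | beta (t u) : HStep (.app (.lam t) u) (t.subst0 u)
  | lam {t t'} : HStep t t' → HStep (.lam t) (.lam t')
  | app {t t'} (u) : HStep t t' → (∀ s, t ≠ .lam s) → HStep (.app t u) (.app t' u)

/-- `HRedN k u v` : `u ≻ v` by a head reduction of length `h(u,v) = k`. -/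
inductive HRedN : ℕ → Lam → Lam → Prop
  | refl (t) : HRedN 0 t t
  | step {k t u v} : HStep t u → HRedN k u v → HRedN (k + 1) t v

/-- `u ≻ v` : `v` is obtained from `u` by head reduction. -/
def HRed (t u : Lam) : Prop := ∃ k, HRedN k t u

/-- Head normal form: no head redex. -/
def HeadNormal (t : Lam) : Prop := ∀ u, ¬ HStep t u

/-- Solvable: the head reduction terminates. -/
def Solvable (t : Lam) : Prop := ∃ v, HRed t v ∧ HeadNormal v

/-- `(t)u₁…uₙ` : iterated application. -/
def appList : Lam → List Lam → Lam
  | t, [] => t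
  | t, u :: us => appList (t.app u) us

/-- `(f)ⁿ x` with `x = var 1`, `f = var 0`. -/
def churchBody : ℕ → Lam
  | 0 => .var 1
  | n + 1 => .app (.var 0) (churchBody n)

/-- Church numeral `n̲ = λx λf (f)ⁿ x`. -/
def church (n : ℕ) : Lam := .lam (.lam (churchBody n))

/-- `0̲ = λx λf x`. -/
def czero : Lam := .lam (.lam (.var 1))

/-- `s̲ = λn λx λf (f)((n)x)f`. -/
def csucc : Lam := .lam (.lam (.lam (.app (.var 0) (.app (.app (.var 2) (.var 1)) (.var 0)))))

/-- `(s̲)ⁿ 0̲`. -/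
def succIter : ℕ → Lam
  | 0 => czero
  | n + 1 => .app csucc (succIter n)

/-- `G = λx λy (x) λz (y)(s̲)z`. -/
def Gop : Lam := .lam (.lam (.app (.var 1) (.lam (.app (.var 1) (.app csucc (.var 0))))))

/-- `δ = λf (f)0̲`. -/
def deltaOp : Lam := .lam (.app (.var 0) czero)

/-- `T₁ = λn ((n)δ)G`. -/
def T1 : Lam := .lam (.app (.app (.var 0) deltaOp) Gop)

/-- `F = λx λy (x)(s̲)y`. -/
def Fop : Lam := .lam (.lam (.app (.var 1) (.app csucc (.var 0))))

/-- `T₂ = λn λf (((n)f)F)0̲`. -/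
def T2 : Lam := .lam (.lam (.app (.app (.app (.var 1) (.var 0)) Fop) czero))

/-- `θ₀ = λx λf λz (x)(λd z)(λx x)`. -/
def theta0 : Lam := .lam (.lam (.lam (.app (.app (.var 2) (.lam (.var 1))) (.lam (.var 0)))))

/-- `T` is a storage operator for the integers (the fixed variable `f` is `var 0`). -/
def IsStorage (T : Lam) : Prop :=
  ∀ n : ℕ, ∃ τ : Lam, BetaEq τ (church n) ∧
    ∀ θ : Lam, BetaEq θ (church n) →
      ∃ σ : ℕ → Lam, HRed (.app (.app T θ) (.var 0)) (.app (.var 0) (τ.subst σ))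

/- AF2 : second-order functional arithmetic over the language {0, s}.
   First-order variables are de Bruijn indices; predicate variables are named
   by a `Bool` (true = ⊥-variable of AF2⊥) and a number, each with an arity. -/

inductive Tm : Type
  | var : ℕ → Tm
  | zero : Tm
  | succ : Tm → Tm
deriving DecidableEq

namespace Tm

def liftBy (c m : ℕ) : Tm → Tm
  | var n => if n < c then var n else var (n + m)
  | zero => zero
  | succ t => succ (t.liftBy c m)

def up (σ : ℕ → Tm) : ℕ → Tm
  | 0 => var 0
  | n + 1 => (σ n).liftBy 0 1

def subst (σ : ℕ → Tm) : Tm → Tm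
  | var n => σ n
  | zero => zero
  | succ t => succ (t.subst σ)

end Tm

/-- The first-order term `sⁿ(0)`. -/
def snum : ℕ → Tm
  | 0 => .zero
  | n + 1 => .succ (snum n)

/-- Second-order formulas.  `pvar b X args` is the atomic formula `X(args)`,
`b = true` marking the special ⊥-variables of AF2⊥; `all1` binds a first-order
de Bruijn variable; `all2 b X k A` is `∀X A` for the `k`-ary predicate variable `(b,X)`. -/
inductive Fml : Type
  | pvar (b : Bool) (X : ℕ) (args : List Tm)
  | arr (A B : Fml)
  | all1 (A : Fml)
  | all2 (b : Bool) (X : ℕ) (k : ℕ) (A : Fml)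
deriving DecidableEq

/-- Absurdity `⊥ := ∀X X` (for a 0-ary predicate variable `X`). -/
def botF : Fml := .all2 false 0 0 (.pvar false 0 [])

/-- `¬A := A → ⊥`. -/
def negF (A : Fml) : Fml := A.arr botF

namespace Fml

/-- Shift first-order variables `≥ c` by `m`. -/
def lift1By (c m : ℕ) : Fml → Fml
  | pvar b X args => pvar b X (args.map (Tm.liftBy c m))
  | arr A B => arr (A.lift1By c m) (B.lift1By c m)
  | all1 A => all1 (A.lift1By (c + 1) m)
  | all2 b X k A => all2 b X k (A.lift1By c m)

/-- First-order substitution in a formula. -/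
def subst1 (σ : ℕ → Tm) : Fml → Fml
  | pvar b X args => pvar b X (args.map (Tm.subst σ))
  | arr A B => arr (A.subst1 σ) (B.subst1 σ)
  | all1 A => all1 (A.subst1 (Tm.up σ))
  | all2 b X k A => all2 b X k (A.subst1 σ)

/-- `A[u/x]` for the first-order variable `0`. -/
def substTop (u : Tm) (A : Fml) : Fml :=
  A.subst1 (fun n => match n with | 0 => u | n + 1 => Tm.var n)

/-- The predicate variable `(b, X)` occurs free. -/
def fv2 (b : Bool) (X : ℕ) : Fml → Prop
  | pvar b' X' _ => b = b' ∧ X = X'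
  | arr A B => A.fv2 b X ∨ B.fv2 b X
  | all1 A => A.fv2 b X
  | all2 b' X' _ A => ¬(b = b' ∧ X = X') ∧ A.fv2 b X

/-- Instantiate the `k` argument slots (first-order variables `0,…,k-1`) of `G` by `args`. -/
def instArgs (k : ℕ) (G : Fml) (args : List Tm) : Fml :=
  G.subst1 (fun n => if n < k then args.getD n Tm.zero else Tm.var (n - k))

/-- `A[G/X]` : substitution of the formula `G` (with argument slots `0,…,k-1`)
for the `k`-ary predicate variable `(b, X)`; `d` is the number of first-order
binders already crossed. -/
def psubst (b : Bool) (X : ℕ) (k : ℕ) (G : Fml) : ℕ → Fml → Fml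
  | d, pvar b' X' args =>
      if b = b' ∧ X = X' then instArgs k (G.lift1By k d) args else pvar b' X' args
  | d, arr A B => arr (psubst b X k G d A) (psubst b X k G d B)
  | d, all1 A => all1 (psubst b X k G (d + 1) A)
  | d, all2 b' X' m A =>
      if b = b' ∧ X = X' then all2 b' X' m A else all2 b' X' m (psubst b X k G d A)

end Fml

/-- ⊥-types : formulas ending with `⊥` or with an atom `X_⊥(t̄)`. -/
inductive IsBotFml : Fml → Prop
  | bot : IsBotFml botF
  | pvar (X args) : IsBotFml (.pvar true X args)
  | arr (A) {B} : IsBotFml B → IsBotFml (.arr A B)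
  | all1 {A} : IsBotFml A → IsBotFml (.all1 A)
  | all2 (b X k) {A} : IsBotFml A → IsBotFml (.all2 b X k A)

/-- Equational consequence of a set `E` of equations. -/
inductive EqCns (E : Set (Tm × Tm)) : Tm → Tm → Prop
  | ax {u v : Tm} (σ : ℕ → Tm) : (u, v) ∈ E → EqCns E (u.subst σ) (v.subst σ)
  | refl (t) : EqCns E t t
  | symm {u v} : EqCns E u v → EqCns E v u
  | trans {u v w} : EqCns E u v → EqCns E v w → EqCns E u w
  | succ {u v} : EqCns E u v → EqCns E u.succ v.succ

/-- `E` is adequate with the type of integers. -/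
def Adequate (E : Set (Tm × Tm)) : Prop :=
  (∀ a, ¬ EqCns E (Tm.succ a) Tm.zero) ∧
  (∀ a b, EqCns E (Tm.succ a) (Tm.succ b) → EqCns E a b)

/-- The AF2 type system (Curry style, de Bruijn contexts, equational rule for `E`). -/
inductive DerA (E : Set (Tm × Tm)) : List Fml → Lam → Fml → Prop
  | var (Γ n A) : Γ[n]? = some A → DerA E Γ (.var n) A
  | lamI {Γ A t B} : DerA E (A :: Γ) t B → DerA E Γ (.lam t) (.arr A B)
  | appE {Γ u v A B} : DerA E Γ u (.arr A B) → DerA E Γ v A → DerA E Γ (.app u v) B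
  | all1I {Γ t A} : DerA E (Γ.map (Fml.lift1By 0 1)) t A → DerA E Γ t (.all1 A)
  | all1E {Γ t A} (u) : DerA E Γ t (.all1 A) → DerA E Γ t (A.substTop u)
  | all2I {Γ t A} (b X k) : DerA E Γ t A → (∀ B ∈ Γ, ¬ B.fv2 b X) →
      DerA E Γ t (.all2 b X k A)
  | all2E {Γ t b X k A} (G) : DerA E Γ t (.all2 b X k A) →
      DerA E Γ t (Fml.psubst b X k G 0 A)
  | eqr {Γ : List Fml} {t : Lam} {A : Fml} {u v : Tm} : DerA E Γ t (A.substTop u) → EqCns E u v →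
      DerA E Γ t (A.substTop v)

/-- The AF2⊥ type system: as AF2, but a ⊥-variable may only be instantiated
by a ⊥-type. -/
inductive DerB (E : Set (Tm × Tm)) : List Fml → Lam → Fml → Prop
  | var (Γ n A) : Γ[n]? = some A → DerB E Γ (.var n) A
  | lamI {Γ A t B} : DerB E (A :: Γ) t B → DerB E Γ (.lam t) (.arr A B)
  | appE {Γ u v A B} : DerB E Γ u (.arr A B) → DerB E Γ v A → DerB E Γ (.app u v) B
  | all1I {Γ t A} : DerB E (Γ.map (Fml.lift1By 0 1)) t A → DerB E Γ t (.all1 A)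
  | all1E {Γ t A} (u) : DerB E Γ t (.all1 A) → DerB E Γ t (A.substTop u)
  | all2I {Γ t A} (b X k) : DerB E Γ t A → (∀ B ∈ Γ, ¬ B.fv2 b X) →
      DerB E Γ t (.all2 b X k A)
  | all2E {Γ t b X k A} (G) : DerB E Γ t (.all2 b X k A) →
      (b = true → IsBotFml G) → DerB E Γ t (Fml.psubst b X k G 0 A)
  | eqr {Γ : List Fml} {t : Lam} {A : Fml} {u v : Tm} : DerB E Γ t (A.substTop u) → EqCns E u v →
      DerB E Γ t (A.substTop v)

/-- `N[t] = ∀X{X(0), ∀y(X(y)→X(sy)) → X(t)}`, with `b` choosing the kind of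
the quantified (unary) predicate variable. -/
def NtyGen (b : Bool) (t : Tm) : Fml :=
  .all2 b 0 1 (.arr (.pvar b 0 [Tm.zero])
    (.arr (.all1 (.arr (.pvar b 0 [Tm.var 0]) (.pvar b 0 [Tm.succ (Tm.var 0)])))
      (.pvar b 0 [t])))

/-- The type `N[t]` of integers. -/
def Nty (t : Tm) : Fml := NtyGen false t

/-- `N^⊥[t]`, quantifying over a ⊥-variable. -/
def Nbot (t : Tm) : Fml := NtyGen true t

/-- The simple Gödel translation `N*[t] = ∀X{¬X(0), ∀y(¬X(y)→¬X(sy)) → ¬X(t)}`. -/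
def Nstar (t : Tm) : Fml :=
  .all2 false 0 1 (.arr (negF (.pvar false 0 [Tm.zero]))
    (.arr (.all1 (.arr (negF (.pvar false 0 [Tm.var 0]))
        (negF (.pvar false 0 [Tm.succ (Tm.var 0)]))))
      (negF (.pvar false 0 [t]))))

/-- `∀x{N*[x] → ¬¬N[x]}`. -/
def specStar : Fml := .all1 ((Nstar (Tm.var 0)).arr (negF (negF (Nty (Tm.var 0)))))

/-- `∀x{N^⊥[x] → ¬¬N[x]}`. -/
def specBot : Fml := .all1 ((Nbot (Tm.var 0)).arr (negF (negF (Nty (Tm.var 0)))))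

/-- `T = λν λf ((ν)(T₁)νf)(λx x)`. -/
def Tnu : Lam :=
  .lam (.lam (.app (.app (.var 1) (.app (.app T1 (.var 1)) (.var 0))) (.lam (.var 0))))

-- positive half development
section Positive

variable {E : Set (Tm × Tm)}

theorem DerB.cast {Γ t A B} (h : DerB E Γ t A) (e : A = B) : DerB E Γ t B := e ▸ h

/-- `¬¬N[t]`. -/
def nnN (t : Tm) : Fml := negF (negF (Nty t))

def SuccTy : Fml := Fml.all1 ((Nty (Tm.var 0)).arr (Nty (Tm.succ (Tm.var 0))))

def GTy : Fml := Fml.all1 ((nnN (Tm.var 0)).arr (nnN (Tm.succ (Tm.var 0))))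

theorem fv2_lift (b X) : ∀ (A : Fml) (c m), Fml.fv2 b X (A.lift1By c m) ↔ A.fv2 b X := by
  intro A
  induction A with
  | pvar b' X' args => intro c m; simp [Fml.lift1By, Fml.fv2]
  | arr A B ihA ihB => intro c m; simp [Fml.lift1By, Fml.fv2, ihA, ihB]
  | all1 A ih => intro c m; simp [Fml.lift1By, Fml.fv2, ih]
  | all2 b' X' k A ih => intro c m; simp [Fml.lift1By, Fml.fv2, ih]

/-- contexts with no free `(false,0)`. -/
def NoC (Γ : List Fml) : Prop := ∀ B ∈ Γ, ¬ B.fv2 false 0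

theorem NoC_map_lift {Γ} (h : NoC Γ) : NoC (Γ.map (Fml.lift1By 0 1)) := by
  intro B hB
  rcases List.mem_map.1 hB with ⟨C, hC, rfl⟩
  rw [fv2_lift]; exact h C hC

theorem nofv_Nty (t) : ¬ (Nty t).fv2 false 0 := by
  simp [Nty, NtyGen, Fml.fv2]

theorem nofv_bot : ¬ botF.fv2 false 0 := by
  simp [botF, Fml.fv2]

theorem nofv_Nbot (t) : ¬ (Nbot t).fv2 false 0 := by
  simp [Nbot, NtyGen, Fml.fv2]

theorem nofv_negN (t) : ¬ (negF (Nty t)).fv2 false 0 := by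
  simp [negF, Fml.fv2, nofv_Nty t, nofv_bot]

theorem nofv_nnN (t) : ¬ (nnN t).fv2 false 0 := by
  simp [nnN, negF, Fml.fv2, nofv_Nty t, nofv_bot]

theorem NoC_cons {A Γ} (hA : ¬ A.fv2 false 0) (h : NoC Γ) : NoC (A :: Γ) := by
  intro B hB; rcases hB with _ | hB
  · exact hA
  · exact h _ (by assumption)

theorem L_czero {Γ} (h : NoC Γ) : DerB E Γ czero (Nty Tm.zero) := by
  show DerB E Γ czero (Fml.all2 false 0 1 _)
  apply DerB.all2I _ _ _ _ h
  apply DerB.lamI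
  apply DerB.lamI
  exact DerB.var _ 1 _ (by simp [negF, nnN])

theorem L_csucc {Γ} (h : NoC Γ) : DerB E Γ csucc SuccTy := by
  apply DerB.all1I
  apply DerB.lamI
  show DerB E _ _ (Fml.all2 false 0 1 _)
  apply DerB.all2I
  · apply DerB.lamI
    apply DerB.lamI
    apply DerB.appE (A := Fml.pvar false 0 [Tm.var 0])
    · exact (DerB.all1E (Tm.var 0) (DerB.var _ 0 (Fml.all1 ((Fml.pvar false 0 [Tm.var 0]).arr (Fml.pvar false 0 [Tm.succ (Tm.var 0)]))) (by simp))).cast (by decide)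
    · apply DerB.appE (A := Fml.all1 ((Fml.pvar false 0 [Tm.var 0]).arr
        (Fml.pvar false 0 [Tm.succ (Tm.var 0)])))
      · apply DerB.appE (A := Fml.pvar false 0 [Tm.zero])
        · exact (DerB.all2E (Fml.pvar false 0 [Tm.var 0])
            (DerB.var _ 2 (Nty (Tm.var 0)) (by simp [Nty, NtyGen])) (by simp)).cast (by decide)
        · exact DerB.var _ 1 _ (by simp [negF, nnN])
      · exact DerB.var _ 0 _ (by simp [negF, nnN])
  · exact NoC_cons (nofv_Nty _) (NoC_map_lift h)

theorem L_delta {Γ} (h : NoC Γ) : DerB E Γ deltaOp (nnN Tm.zero) := by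
  apply DerB.lamI
  apply DerB.appE (A := Nty Tm.zero)
  · exact DerB.var _ 0 _ (by simp [negF, nnN])
  · exact L_czero (NoC_cons (nofv_negN _) h)

theorem L_G {Γ} (h : NoC Γ) : DerB E Γ Gop GTy := by
  apply DerB.all1I
  apply DerB.lamI
  apply DerB.lamI
  apply DerB.appE (A := negF (Nty (Tm.var 0)))
  · exact DerB.var _ 1 _ (by simp [negF, nnN])
  · apply DerB.lamI
    apply DerB.appE (A := Nty (Tm.succ (Tm.var 0)))
    · exact DerB.var _ 1 _ (by simp [negF, nnN])
    · apply DerB.appE (A := Nty (Tm.var 0))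
      · have hctx : NoC (Nty (Tm.var 0) :: negF (Nty (Tm.succ (Tm.var 0))) ::
          nnN (Tm.var 0) :: Γ.map (Fml.lift1By 0 1)) :=
          NoC_cons (nofv_Nty _) (NoC_cons (nofv_negN _)
            (NoC_cons (nofv_nnN _) (NoC_map_lift h)))
        exact (DerB.all1E (Tm.var 0) (L_csucc hctx)).cast (by decide)
      · exact DerB.var _ 0 _ (by simp [negF, nnN])

theorem posMain : DerB E [] Tnu specBot := by
  apply DerB.all1I
  apply DerB.lamI
  apply DerB.lamI
  have hΓ₂ : NoC [negF (Nty (Tm.var 0)), Nbot (Tm.var 0)] :=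
    NoC_cons (nofv_negN _) (NoC_cons (nofv_Nbot _) (by intro B hB; cases hB))
  apply DerB.appE (A := Fml.all1 (botF.arr botF))
  · apply DerB.appE (A := botF)
    · exact (DerB.all2E botF (DerB.var _ 1 (Nbot (Tm.var 0)) (by simp [Nbot, NtyGen])) (fun _ => IsBotFml.bot)).cast (by decide)
    · -- M : botF
      apply DerB.appE (A := negF (Nty (Tm.var 0)))
      · apply DerB.appE (A := Nbot (Tm.var 0))
        · -- T1 : Nbot x → ¬¬N x
          apply DerB.lamI
          have hΓ₃ : NoC [Nbot (Tm.var 0), negF (Nty (Tm.var 0)), Nbot (Tm.var 0)] :=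
            NoC_cons (nofv_Nbot _) hΓ₂
          apply DerB.appE (A := GTy)
          · apply DerB.appE (A := nnN Tm.zero)
            · exact (DerB.all2E (nnN (Tm.var 0)) (DerB.var _ 0 (Nbot (Tm.var 0)) (by simp [Nbot, NtyGen]))
                (fun _ => IsBotFml.arr _ IsBotFml.bot)).cast (by decide)
            · exact L_delta hΓ₃
          · exact L_G hΓ₃
        · exact DerB.var _ 1 _ (by simp [negF, nnN])
      · exact DerB.var _ 0 _ (by simp [negF, nnN])
  · apply DerB.all1I
    apply DerB.lamI
    exact DerB.var _ 0 _ (by simp [negF, nnN])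

end Positive

/-! ## Negative half : infrastructure -/

/-- Names of predicate variables. -/
abbrev PName := Bool × ℕ

/-- Propositional second-order formulas (erasure of `Fml`). -/
inductive F0 : Type
  | atF : PName → F0
  | arrF : F0 → F0 → F0
  | allF : PName → F0 → F0
deriving DecidableEq

namespace F0

/-- capture-style substitution of `G` for the atom `p`. -/
def ps (p : PName) (G : F0) : F0 → F0
  | atF q => if q = p then G else atF q
  | arrF A B => arrF (ps p G A) (ps p G B)
  | allF q A => if q = p then allF q A else allF q (ps p G A)

/-- free names. -/
def fv : F0 → PName → Prop
  | atF q, p => q = p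
  | arrF A B, p => A.fv p ∨ B.fv p
  | allF q A, p => p ≠ q ∧ A.fv p

end F0

open F0

/-- Chains of substitutions, applied head first. -/
def capp : List (PName × F0) → F0 → F0
  | [], A => A
  | e :: σ, A => capp σ (ps e.1 e.2 A)

/-- A prefix of universal quantifiers. -/
def wraps : List PName → F0 → F0
  | [], A => A
  | q :: W, A => allF q (wraps W A)

def bot0 : F0 := allF (false, 0) (atF (false, 0))

theorem ps_atF (p G q) : ps p G (atF q) = if q = p then G else atF q := rfl
theorem ps_arrF (p G A B) : ps p G (arrF A B) = arrF (ps p G A) (ps p G B) := rfl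

theorem ps_not_fv {p G A} (h : ¬ A.fv p) : ps p G A = A := by
  induction A with
  | atF q => simp [F0.fv] at h; simp [F0.ps, h]
  | arrF A B ihA ihB =>
      simp [F0.fv] at h; simp [F0.ps, ihA h.1, ihB h.2]
  | allF q A ih =>
      by_cases hq : q = p
      · simp [F0.ps, hq]
      · simp [F0.fv] at h
        have := h (fun hh => hq hh.symm)
        simp [F0.ps, hq, ih this]

theorem capp_arrF (σ A B) : capp σ (arrF A B) = arrF (capp σ A) (capp σ B) := by
  induction σ generalizing A B with
  | nil => rfl
  | cons e σ ih => simp [capp, F0.ps, ih]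

/-- Remove the entries of a chain at a given name. -/
def filt (z : PName) : List (PName × F0) → List (PName × F0)
  | [] => []
  | e :: σ => if e.1 = z then filt z σ else e :: filt z σ

theorem mem_filt {z e} : ∀ {σ}, e ∈ filt z σ → e ∈ σ ∧ e.1 ≠ z := by
  intro σ
  induction σ with
  | nil => intro h; cases h
  | cons f σ ih =>
      intro h
      by_cases hf : f.1 = z
      · simp [filt, hf] at h
        obtain ⟨h1, h2⟩ := ih h
        exact ⟨by simp [h1], h2⟩
      · simp [filt, hf] at h
        rcases h with rfl | h
        · exact ⟨by simp, hf⟩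
        · obtain ⟨h1, h2⟩ := ih h
          exact ⟨by simp [h1], h2⟩

/-- capp on a quantifier: entries at the bound name are filtered out. -/
theorem capp_allF (σ q A) :
    capp σ (allF q A) = allF q (capp (filt q σ) A) := by
  induction σ generalizing A with
  | nil => rfl
  | cons e σ ih =>
      by_cases h : e.1 = q
      · simp [capp, F0.ps, filt, h, ih]
      · have hq : (q = e.1) = False := by simp; exact fun hh => h hh.symm
        simp [capp, F0.ps, filt, hq, h, ih]

theorem capp_atF_frozen {σ : List (PName × F0)} {r : PName}
    (h : ∀ e ∈ σ, e.1 ≠ r) : capp σ (atF r) = atF r := by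
  induction σ with
  | nil => rfl
  | cons e σ ih =>
      have h1 : e.1 ≠ r := h e (by simp)
      have : (r = e.1) = False := by simp; exact fun hh => h1 hh.symm
      simp [capp, F0.ps, this]
      exact ih (fun e' he' => h e' (by simp [he']))

/-- Root kinds. -/
inductive RootK : Type
  | atK : PName → RootK
  | arrK : RootK
  | allK : PName → RootK
deriving DecidableEq

def rootOf : F0 → RootK
  | atF p => .atK p
  | arrF _ _ => .arrK
  | allF q _ => .allK q

theorem rootOf_capp_arr {σ A B} : rootOf (capp σ (arrF A B)) = .arrK := by
  rw [capp_arrF]; rfl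

theorem rootOf_capp_allF {σ q A} : rootOf (capp σ (allF q A)) = .allK q := by
  rw [capp_allF]; rfl

/-! ## Erasure from AF2 to the propositional system -/

/-- Erasure of formulas: drop first-order content. -/
def er : Fml → F0
  | .pvar b X _ => atF (b, X)
  | .arr A B => arrF (er A) (er B)
  | .all1 A => er A
  | .all2 b X _ A => allF (b, X) (er A)

theorem er_lift (A : Fml) (c m : ℕ) : er (A.lift1By c m) = er A := by
  induction A generalizing c with
  | pvar b X args => rfl
  | arr A B ihA ihB => simp [Fml.lift1By, er, ihA, ihB]
  | all1 A ih => simp [Fml.lift1By, er, ih]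
  | all2 b X k A ih => simp [Fml.lift1By, er, ih]

theorem er_subst1 (A : Fml) (σ : ℕ → Tm) : er (A.subst1 σ) = er A := by
  induction A generalizing σ with
  | pvar b X args => rfl
  | arr A B ihA ihB => simp [Fml.subst1, er, ihA, ihB]
  | all1 A ih => simp [Fml.subst1, er, ih]
  | all2 b X k A ih => simp [Fml.subst1, er, ih]

theorem er_substTop (A : Fml) (u : Tm) : er (A.substTop u) = er A := er_subst1 A _

theorem er_instArgs (k : ℕ) (G : Fml) (args : List Tm) :
    er (Fml.instArgs k G args) = er G := er_subst1 G _

theorem er_psubst (b X k G d A) :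
    er (Fml.psubst b X k G d A) = ps (b, X) (er G) (er A) := by
  induction A generalizing d with
  | pvar b' X' args =>
      by_cases h : b = b' ∧ X = X'
      · obtain ⟨rfl, rfl⟩ := h
        simp [Fml.psubst, er, F0.ps, er_instArgs, er_lift]
      · have h2 : ((b', X') = (b, X)) = False := by
          simp [Prod.ext_iff]; intro hb hX; exact h ⟨hb.symm, hX.symm⟩
        simp [Fml.psubst, h, er, F0.ps, h2]
  | arr A B ihA ihB => simp [Fml.psubst, er, F0.ps, ihA, ihB]
  | all1 A ih => simp [Fml.psubst, er, ih]
  | all2 b' X' m A ih =>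
      by_cases h : b = b' ∧ X = X'
      · obtain ⟨rfl, rfl⟩ := h
        simp [Fml.psubst, er, F0.ps]
      · have h2 : ((b', X') = (b, X)) = False := by
          simp [Prod.ext_iff]; intro hb hX; exact h ⟨hb.symm, hX.symm⟩
        simp [Fml.psubst, h, er, F0.ps, h2, ih]

theorem er_fv2 (A : Fml) (b X) : A.fv2 b X ↔ (er A).fv (b, X) := by
  induction A with
  | pvar b' X' args =>
      simp [Fml.fv2, er, F0.fv, Prod.ext_iff, eq_comm]
  | arr A B ihA ihB => simp [Fml.fv2, er, F0.fv, ihA, ihB]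
  | all1 A ih => simpa [Fml.fv2, er] using ih
  | all2 b' X' k A ih =>
      simp [Fml.fv2, er, F0.fv, ih, Prod.ext_iff]

/-- The erased type system (with capture-style instantiation). -/
inductive Der0 : List F0 → Lam → F0 → Prop
  | var (Γ n A) : Γ[n]? = some A → Der0 Γ (.var n) A
  | lamI {Γ A t B} : Der0 (A :: Γ) t B → Der0 Γ (.lam t) (arrF A B)
  | appE {Γ u v A B} : Der0 Γ u (arrF A B) → Der0 Γ v A → Der0 Γ (.app u v) B
  | wrap {Γ t T} (q) : Der0 Γ t T → (∀ B ∈ Γ, ¬ B.fv q) → Der0 Γ t (allF q T)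
  | inst {Γ t q T} (G) : Der0 Γ t (allF q T) → Der0 Γ t (ps q G T)

theorem Der0.cast {Γ t A B} (h : Der0 Γ t A) (e : A = B) : Der0 Γ t B := e ▸ h

theorem erasure {E Γ t A} (h : DerA E Γ t A) : Der0 (Γ.map er) t (er A) := by
  induction h with
  | var Γ n A hA =>
      exact Der0.var _ n _ (by simp [hA])
  | lamI _ ih => exact Der0.lamI ih
  | appE _ _ ih1 ih2 => exact Der0.appE ih1 ih2
  | all1I _ ih =>
      rename_i Γ' t' A' _
      have e : (Γ'.map (Fml.lift1By 0 1)).map er = Γ'.map er := by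
        rw [List.map_map]; apply List.map_congr_left; intro B _
        exact er_lift B 0 1
      show Der0 (Γ'.map er) t' (er A')
      rw [← e]; exact ih
  | all1E u _ ih => exact ih.cast (by rw [er_substTop]; rfl)
  | all2I b X k _ hfv ih =>
      apply Der0.wrap (b, X) ih
      intro B hB
      rcases List.mem_map.1 hB with ⟨C, hC, rfl⟩
      rw [← er_fv2]; exact hfv C hC
  | all2E G _ ih =>
      exact (Der0.inst (er G) ih).cast (er_psubst _ _ _ _ _ _).symm
  | eqr _ _ ih => exact ih.cast (by rw [er_substTop, er_substTop])

/-! ## Normal forms for Der0-derivable types -/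

def fvC (Γ : List F0) (q : PName) : Prop := ∃ B ∈ Γ, B.fv q

/-- Reachability of types from a base type: interleaved head-instantiations
and substitutions at fresh names. -/
inductive Steps (S : PName → Prop) (B : F0) : F0 → Prop
  | refl : Steps S B B
  | strip {q G T} : Steps S B (allF q T) → Steps S B (ps q G T)
  | fps {q G Z} : Steps S B Z → ¬ S q → Steps S B (ps q G Z)

/-- The "base types" of a term in a context. -/
def Base (Γ : List F0) : Lam → F0 → Prop
  | .var n, B => Γ[n]? = some B
  | .lam t, B => ∃ P C, B = arrF P C ∧ Der0 (P :: Γ) t C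
  | .app u v, B => ∃ A, Der0 Γ u (arrF A B) ∧ Der0 Γ v A

theorem capp_append (σ : List (PName × F0)) (e A) :
    capp (σ ++ [e]) A = ps e.1 e.2 (capp σ A) := by
  induction σ generalizing A with
  | nil => rfl
  | cons f σ ih => simp [capp, ih]

theorem ps_wraps_mem {q W} (G Z) (h : q ∈ W) :
    ps q G (wraps W Z) = wraps W Z := by
  induction W with
  | nil => cases h
  | cons w W ih =>
      by_cases hw : w = q
      · simp [wraps, F0.ps, hw]
      · rcases List.mem_cons.1 h with h1 | h2
        · exact absurd h1.symm hw
        · simp [wraps, F0.ps, hw, ih h2]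

theorem ps_wraps_not_mem {q W} (G Z) (h : q ∉ W) :
    ps q G (wraps W Z) = wraps W (ps q G Z) := by
  induction W with
  | nil => rfl
  | cons w W ih =>
      have hw : ¬ (w = q) := fun hh => h (by simp [hh])
      simp [wraps, F0.ps, hw, ih (fun hh => h (by simp [hh]))]

theorem arr_of_rootK {M : F0} (h : rootOf M = .arrK) : ∃ A B, M = arrF A B := by
  cases M with
  | atF p => cases h
  | arrF A B => exact ⟨A, B, rfl⟩
  | allF q A => cases h

theorem rootOf_capp_arr' {M : F0} (h : rootOf M = .arrK) (σ) :
    rootOf (capp σ M) = .arrK := by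
  obtain ⟨A, B, rfl⟩ := arr_of_rootK h
  exact rootOf_capp_arr

/-- Main inversion: every derivable type is a fresh quantifier prefix over a
type reachable from a base type. -/
theorem M1 {Γ t T} (h : Der0 Γ t T) :
    ∃ (W : List PName) (Z B : F0), (∀ q ∈ W, ¬ fvC Γ q) ∧ T = wraps W Z ∧
      Base Γ t B ∧ Steps (fvC Γ) B Z := by
  induction h with
  | var Γ n A hA => exact ⟨[], A, A, by simp, rfl, hA, Steps.refl⟩
  | lamI h ih =>
      rename_i Γ' A' t' B'
      exact ⟨[], _, _, by simp, rfl, ⟨A', B', rfl, h⟩, Steps.refl⟩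
  | appE h1 h2 _ _ =>
      exact ⟨[], _, _, by simp, rfl, ⟨_, h1, h2⟩, Steps.refl⟩
  | wrap q h hfv ih =>
      obtain ⟨W, Z, B, hW, rfl, hB, hS⟩ := ih
      refine ⟨q :: W, Z, B, ?_, rfl, hB, hS⟩
      intro q' hq'
      rcases List.mem_cons.1 hq' with rfl | h2
      · rintro ⟨C, hC, hfvC⟩; exact hfv C hC hfvC
      · exact hW q' h2
  | inst G h ih =>
      rename_i Γ' t' q T₀
      obtain ⟨W, Z, B, hW, hwr, hB, hS⟩ := ih
      cases W with
      | nil =>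
          have hZ : Z = allF q T₀ := hwr.symm
          subst hZ
          exact ⟨[], _, B, by simp, rfl, hB, Steps.strip hS⟩
      | cons q' W' =>
          have hwr' : allF q T₀ = allF q' (wraps W' Z) := hwr
          injection hwr' with e1 e2
          subst e2
          by_cases hmem : q ∈ W'
          · exact ⟨W', Z, B, fun x hx => hW x (List.mem_cons_of_mem _ hx),
              (ps_wraps_mem G Z hmem), hB, hS⟩
          · refine ⟨W', ps q G Z, B, fun x hx => hW x (List.mem_cons_of_mem _ hx),
              (ps_wraps_not_mem G Z hmem), hB, Steps.fps hS ?_⟩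
            rw [e1]; exact hW q' (by simp)

theorem steps_atom {S : PName → Prop} {p Z} (h : Steps S (atF p) Z) (hp : S p) :
    Z = atF p := by
  induction h with
  | refl => rfl
  | strip h ih => cases ih
  | fps h hq ih =>
      rename_i q G Z₀
      subst ih
      have hpq : ¬ p = q := fun hh => hq (hh ▸ hp)
      simp [F0.ps, hpq]

theorem steps_allF_atom {S : PName → Prop} {z p Z}
    (h : Steps S (allF z (atF p)) Z) (hp : S p) (hzp : p ≠ z) :
    Z = allF z (atF p) ∨ Z = atF p := by
  induction h with
  | refl => exact Or.inl rfl
  | strip h ih =>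
      rename_i q G T
      rcases ih with h1 | h1
      · have h1' : allF q T = allF z (atF p) := h1
        injection h1' with e1 e2
        subst e1; subst e2
        right; simp [F0.ps, hzp]
      · cases h1
  | fps h hq ih =>
      rename_i q G Z₀
      have hqp : ¬ (p = q) := fun hh => hq (hh ▸ hp)
      rcases ih with rfl | rfl
      · left
        by_cases hzq : z = q
        · simp [F0.ps, hzq]
        · simp [F0.ps, hzq, hqp]
      · right; simp [F0.ps, hqp]

theorem steps_arr {S : PName → Prop} {M Z} (hM : rootOf M = .arrK)
    (h : Steps S M Z) : ∃ σ, (∀ e ∈ σ, ¬ S e.1) ∧ Z = capp σ M := by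
  induction h with
  | refl => exact ⟨[], by simp, rfl⟩
  | strip h ih =>
      obtain ⟨σ, hσ, he⟩ := ih
      have := rootOf_capp_arr' hM σ
      rw [← he] at this; cases this
  | fps h hq ih =>
      rename_i q G Z₀
      obtain ⟨σ, hσ, rfl⟩ := ih
      refine ⟨σ ++ [(q, G)], ?_, (capp_append σ (q, G) M).symm⟩
      intro e he
      rcases List.mem_append.1 he with h1 | h1
      · exact hσ e h1
      · simp at h1; subst h1; exact hq

theorem steps_allF_arr {S : PName → Prop} {z M Z} (hM : rootOf M = .arrK)
    (h : Steps S (allF z M) Z) :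
    (∃ σ₀, (∀ e ∈ σ₀, ¬ S e.1) ∧ Z = allF z (capp σ₀ M)) ∨
    (∃ G σ₀ σ₁, (∀ e ∈ σ₀, ¬ S e.1) ∧ (∀ e ∈ σ₁, ¬ S e.1) ∧
      Z = capp σ₁ (ps z G (capp σ₀ M))) := by
  induction h with
  | refl => exact Or.inl ⟨[], by simp, rfl⟩
  | strip h ih =>
      rename_i q G T
      rcases ih with ⟨σ₀, hσ₀, he⟩ | ⟨G', σ₀, σ₁, hσ₀, hσ₁, he⟩
      · have he' : allF q T = allF z (capp σ₀ M) := he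
        injection he' with e1 e2
        subst e1; subst e2
        exact Or.inr ⟨G, σ₀, [], hσ₀, by simp, rfl⟩
      · exfalso
        have h1 : rootOf (ps z G' (capp σ₀ M)) = .arrK := by
          obtain ⟨A, B, hAB⟩ := arr_of_rootK (rootOf_capp_arr' hM σ₀)
          rw [hAB]; rfl
        have := rootOf_capp_arr' h1 σ₁
        rw [← he] at this; cases this
  | fps h hq ih =>
      rename_i q G Z₀
      rcases ih with ⟨σ₀, hσ₀, rfl⟩ | ⟨G', σ₀, σ₁, hσ₀, hσ₁, rfl⟩
      · left
        by_cases hzq : z = q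
        · exact ⟨σ₀, hσ₀, by simp [F0.ps, hzq]⟩
        · refine ⟨σ₀ ++ [(q, G)], ?_, ?_⟩
          · intro e he
            rcases List.mem_append.1 he with h1 | h1
            · exact hσ₀ e h1
            · simp at h1; subst h1; exact hq
          · simp [F0.ps, hzq, capp_append]
      · right
        refine ⟨G', σ₀, σ₁ ++ [(q, G)], hσ₀, ?_, by rw [capp_append]⟩
        intro e he
        rcases List.mem_append.1 he with h1 | h1
        · exact hσ₁ e h1
        · simp at h1; subst h1; exact hq

/-! ## Root coherence under filtered chains, target constants, assembly -/

theorem capp_comp (τ σ : List (PName × F0)) (A : F0) :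
    capp σ (capp τ A) = capp (τ ++ σ) A := by
  induction τ generalizing A with
  | nil => rfl
  | cons e τ ih => simp [capp, ih]

theorem capp_no_fv {σ : List (PName × F0)} {Y : F0}
    (h : ∀ e ∈ σ, ¬ Y.fv e.1) : capp σ Y = Y := by
  induction σ with
  | nil => rfl
  | cons e σ ih =>
      have h1 : ps e.1 e.2 Y = Y := ps_not_fv (h e (by simp))
      simp [capp, h1]
      exact ih (fun e' he' => h e' (by simp [he']))

/-- Filtering the chain at `z` can only change the root if the filtered value
is the atom `z`. -/
theorem root_filter (z : PName) :
    ∀ (σ : List (PName × F0)) (Y : F0),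
      rootOf (capp (filt z σ) Y) ≠ .atK z →
      rootOf (capp σ Y) = rootOf (capp (filt z σ) Y) := by
  intro σ
  induction σ with
  | nil => intro Y h; rfl
  | cons e σ ih =>
      intro Y h
      cases Y with
      | arrF A B =>
          rw [rootOf_capp_arr' (by rfl), rootOf_capp_arr' (by rfl)]
      | allF w Y₀ =>
          rw [rootOf_capp_allF, rootOf_capp_allF]
      | atF p =>
          by_cases hq : e.1 = z
          · rw [show filt z (e :: σ) = filt z σ by simp [filt, hq]] at h ⊢
            by_cases hp : p = z
            · exfalso
              apply h
              have : capp (filt z σ) (atF p) = atF p := by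
                apply capp_atF_frozen
                intro e' he'
                have := (mem_filt he').2
                intro hh; rw [hh, hp] at this; exact this rfl
              rw [this, hp]; rfl
            · have hne : ¬ (p = e.1) := by rw [hq]; exact hp
              show rootOf (capp σ (ps e.1 e.2 (atF p))) = _
              simp only [F0.ps, if_neg hne]
              exact ih (atF p) h
          · rw [show filt z (e :: σ) = e :: filt z σ by simp [filt, hq]] at h ⊢
            show rootOf (capp σ (ps e.1 e.2 (atF p))) =
              rootOf (capp (filt z σ) (ps e.1 e.2 (atF p)))
            exact ih (ps e.1 e.2 (atF p)) (by exact h)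

/-! ### Target constants -/

def z0 : PName := (false, 0)
def Q0 : F0 := arrF (atF z0) bot0
def Mstar : F0 := arrF Q0 (arrF (arrF Q0 Q0) Q0)
def NS0 : F0 := allF z0 Mstar
def N00 : F0 := allF z0 (arrF (atF z0) (arrF (arrF (atF z0) (atF z0)) (atF z0)))
def DB : F0 := arrF (arrF N00 bot0) bot0

theorem er_specStar : er specStar = arrF NS0 DB := by decide

/-! ## Main negative theorem -/

theorem wraps_arr_nil {W Z A B} (h : arrF A B = wraps W Z) :
    W = [] ∧ Z = arrF A B := by
  cases W with
  | nil => exact ⟨rfl, h.symm⟩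
  | cons w W => simp [wraps] at h

theorem capp_filt_atF_frozen {σ : List (PName × F0)} {z r : PName}
    (hr : r = z ∨ ∀ e ∈ σ, e.1 ≠ r) : capp (filt z σ) (atF r) = atF r := by
  apply capp_atF_frozen
  intro e he
  rcases hr with rfl | hr
  · exact (mem_filt he).2
  · exact hr e (mem_filt he).1

/-- Unpacking the three applications in the body of `T`. -/
theorem body_unpack {Γ₂ : List F0} {v w : Lam} {Bb a : F0}
    (h : Der0 Γ₂ (.app (.app (.var 1) v) w) Bb) (ha : Γ₂[1]? = some a) :
    ∃ (A₁ B₁ A₂ B₀ : F0) (WB : List PName) (ZB : F0),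
      Steps (fvC Γ₂) a (arrF A₁ B₁) ∧
      Steps (fvC Γ₂) B₁ (arrF A₂ B₀) ∧
      Steps (fvC Γ₂) B₀ ZB ∧
      (∀ q ∈ WB, ¬ fvC Γ₂ q) ∧ Bb = wraps WB ZB := by
  obtain ⟨WB, ZB, B₀, hWB, hwr, hBase, hS⟩ := M1 h
  obtain ⟨A₂, hfn, -⟩ := hBase
  obtain ⟨W₃, Z₃, B₁', hW₃, hwr₃, hBase₃, hS₃⟩ := M1 hfn
  obtain ⟨-, rfl⟩ := wraps_arr_nil hwr₃
  obtain ⟨A₁, hv, -⟩ := hBase₃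
  obtain ⟨W₄, Z₄, B₂, hW₄, hwr₄, hBase₄, hS₄⟩ := M1 hv
  obtain ⟨-, rfl⟩ := wraps_arr_nil hwr₄
  have hBase₄' : Γ₂[1]? = some B₂ := hBase₄
  have hB₂ : B₂ = a := by rw [ha] at hBase₄'; exact (Option.some.inj hBase₄').symm
  subst hB₂
  exact ⟨A₁, B₁', A₂, B₀, WB, ZB, hS₄, hS₃, hS, hWB, hwr⟩

theorem not_derA (E : Set (Tm × Tm)) : ¬ DerA E [] Tnu specStar := by
  intro hder
  have h0 : Der0 [] Tnu (arrF NS0 DB) := by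
    have h1 := erasure hder
    rw [show ([] : List Fml).map er = [] from rfl, er_specStar] at h1
    exact h1
  -- level 0 : Tnu = λλ body
  obtain ⟨W, Z, B, hW, hwr, hB, hS⟩ := M1 h0
  obtain ⟨-, rfl⟩ := wraps_arr_nil hwr
  obtain ⟨a, D, rfl, hD⟩ := hB
  obtain ⟨σ, hσ, hcap⟩ := steps_arr (by rfl) hS
  rw [capp_arrF] at hcap
  injection hcap with hE1 hE2
  -- level 1 : λ body
  obtain ⟨W₁, Z₁, B₁, hW₁, hwr₁, hB₁, hS₁⟩ := M1 hD
  obtain ⟨Af, Bb, rfl, hBb⟩ := hB₁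
  obtain ⟨τ₁, hτ₁, hcap₁⟩ := steps_arr (by rfl) hS₁
  -- W₁ must be empty since capp σ D is arrow-rooted
  have hW₁nil : W₁ = [] := by
    cases W₁ with
    | nil => rfl
    | cons w W₁' =>
        exfalso
        have h1 : rootOf (capp σ D) = .arrK := by rw [← hE2]; rfl
        rw [hwr₁] at h1
        rw [show wraps (w :: W₁') Z₁ = allF w (wraps W₁' Z₁) from rfl,
          rootOf_capp_allF] at h1
        cases h1
  subst hW₁nil
  rw [show wraps [] Z₁ = Z₁ from rfl] at hwr₁
  subst hwr₁
  subst hcap₁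
  -- combine chains
  set Γ₂ : List F0 := [Af, a] with hΓ₂
  have hfree_a : ∀ e ∈ τ₁, ¬ a.fv e.1 := by
    intro e he hf
    exact hτ₁ e he ⟨a, by simp, hf⟩
  have hE2' : DB = capp (τ₁ ++ σ) (arrF Af Bb) := by
    rw [← capp_comp]; exact hE2
  have hE1' : NS0 = capp (τ₁ ++ σ) a := by
    rw [← capp_comp, capp_no_fv hfree_a]; exact hE1
  set σ₂ := τ₁ ++ σ with hσ₂
  rw [capp_arrF] at hE2'
  injection hE2' with hAf hF2
  -- hF2 : bot0 = capp σ₂ Bb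
  -- facts about fvC Γ₂
  have hamem : a ∈ Γ₂ := by simp [hΓ₂]
  have ha1 : Γ₂[1]? = some a := rfl
  -- body unpack
  obtain ⟨A₁, B₁, A₂, B₀, WB, ZB, hSa, hSb, hSc, hWB, hBbwr⟩ := body_unpack hBb ha1
  subst hBbwr
  -- case analysis on a
  cases a with
  | arrF A B =>
      have h1 : rootOf NS0 = .arrK := by rw [hE1']; exact rootOf_capp_arr
      cases h1
  | atF p =>
      have hp : fvC Γ₂ p := ⟨atF p, hamem, rfl⟩
      have := steps_atom hSa hp
      simp at this
  | allF q Ma =>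
      have hq : q = z0 := by
        have h1 : rootOf NS0 = .allK q := by rw [hE1', rootOf_capp_allF]
        have h2 : RootK.allK z0 = RootK.allK q := h1
        injection h2 with h3
        exact h3.symm
      subst hq
      have hMa : Mstar = capp (filt z0 σ₂) Ma := by
        rw [capp_allF] at hE1'
        have h1 : allF z0 Mstar = allF z0 (capp (filt z0 σ₂) Ma) := hE1'
        injection h1
      cases Ma with
      | allF w Ma' =>
          have : rootOf Mstar = .allK w := by rw [hMa, rootOf_capp_allF]
          cases this
      | atF p =>
          have hpz : p ≠ z0 := by
            intro h1; subst h1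
            rw [capp_filt_atF_frozen (Or.inl rfl)] at hMa
            simp [Mstar] at hMa
          have hp : fvC Γ₂ p := ⟨allF z0 (atF p), hamem, ⟨hpz, rfl⟩⟩
          rcases steps_allF_atom hSa hp hpz with h1 | h1 <;> simp at h1
      | arrF a₁ Ra =>
          rw [capp_arrF] at hMa
          have hMa' : arrF Q0 (arrF (arrF Q0 Q0) Q0) =
              arrF (capp (filt z0 σ₂) a₁) (capp (filt z0 σ₂) Ra) := hMa
          injection hMa' with hA hRa
          cases Ra with
          | allF w Ra' =>
              have : rootOf (arrF (arrF Q0 Q0) Q0) = .allK w := by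
                rw [hRa, rootOf_capp_allF]
              cases this
          | atF p =>
              -- CASE 3
              have hpz : p ≠ z0 := by
                intro h1; subst h1
                rw [capp_filt_atF_frozen (Or.inl rfl)] at hRa
                simp at hRa
              have hp : fvC Γ₂ p := ⟨_, hamem, ⟨hpz, Or.inr rfl⟩⟩
              rcases steps_allF_arr (by rfl) hSa with ⟨σ₀, hσ₀, h1⟩ |
                ⟨G, σ₀, σ₁', hσ₀, hσ₁, h1⟩
              · simp at h1
              · have hfrz : ∀ (τ : List (PName × F0)),
                    (∀ e ∈ τ, ¬ fvC Γ₂ e.1) → capp τ (atF p) = atF p := by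
                  intro τ hτ
                  exact capp_atF_frozen (fun e he hh => hτ e he (hh ▸ hp))
                rw [capp_arrF, ps_arrF, hfrz σ₀ hσ₀,
                  show ps z0 G (atF p) = atF p by simp [F0.ps, hpz],
                  capp_arrF, hfrz σ₁' hσ₁] at h1
                injection h1 with h2 h3
                -- h3 : B₁ = atF p
                subst h3
                have := steps_atom hSb hp
                simp at this
          | arrF a₂ Qa =>
              rw [capp_arrF] at hRa
              have hRa' : arrF (arrF Q0 Q0) Q0 =
                  arrF (capp (filt z0 σ₂) a₂) (capp (filt z0 σ₂) Qa) := hRa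
              injection hRa' with hA2 hQa
              -- hQa : Q0 = capp (filt z0 σ₂) Qa
              rcases steps_allF_arr (by rfl) hSa with ⟨σ₀, hσ₀, h1⟩ |
                ⟨G, σ₀, σ₁', hσ₀, hσ₁, h1⟩
              · simp at h1
              · rw [capp_arrF, ps_arrF, capp_arrF] at h1
                injection h1 with h2 h3
                -- h3 : B₁ = capp σ₁' (ps z0 G (capp σ₀ (arrF a₂ Qa)))
                rw [show capp σ₀ (arrF a₂ Qa) = arrF (capp σ₀ a₂) (capp σ₀ Qa)
                  from capp_arrF _ _ _, ps_arrF, capp_arrF] at h3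
                cases Qa with
                | allF w Qa' =>
                    have : rootOf Q0 = .allK w := by rw [hQa, rootOf_capp_allF]
                    cases this
                | atF r =>
                    -- CASE 4
                    have hrz : r ≠ z0 := by
                      intro h4; subst h4
                      rw [capp_filt_atF_frozen (Or.inl rfl)] at hQa
                      simp [Q0] at hQa
                    have hr : fvC Γ₂ r := ⟨_, hamem, ⟨hrz, Or.inr (Or.inr rfl)⟩⟩
                    have hfrz : ∀ (τ : List (PName × F0)),
                        (∀ e ∈ τ, ¬ fvC Γ₂ e.1) → capp τ (atF r) = atF r := by
                      intro τ hτ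
                      exact capp_atF_frozen (fun e he hh => hτ e he (hh ▸ hr))
                    rw [hfrz σ₀ hσ₀, show ps z0 G (atF r) = atF r by
                      simp [F0.ps, hrz], hfrz σ₁' hσ₁] at h3
                    -- h3 : B₁ = arrF X₂ (atF r)
                    subst h3
                    obtain ⟨τ₅, hτ₅, h4⟩ := steps_arr (by rfl) hSb
                    rw [capp_arrF, hfrz τ₅ hτ₅] at h4
                    injection h4 with h5 h6
                    subst h6
                    have h7 := steps_atom hSc hr
                    subst h7
                    -- now the σ₂-contradiction
                    match WB, hWB with
                    | [], _ =>
                        have h8 : rootOf (capp (filt z0 σ₂) (atF r)) ≠ .atK z0 := by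
                          rw [← hQa]; simp [Q0, rootOf]
                        have h9 := root_filter z0 σ₂ (atF r) h8
                        rw [← hQa] at h9
                        have h10 : rootOf (capp σ₂ (atF r)) = .allK z0 := by
                          rw [show capp σ₂ (wraps [] (atF r)) = capp σ₂ (atF r)
                            from rfl] at hF2
                          rw [← hF2]; rfl
                        rw [h10] at h9
                        cases h9
                    | [w], hWB =>
                        rw [show wraps [w] (atF r) = allF w (atF r) from rfl,
                          capp_allF] at hF2
                        have h8 : allF z0 (atF z0) =
                            allF w (capp (filt w σ₂) (atF r)) := hF2
                        injection h8 with h9 h10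
                        subst h9
                        rw [← hQa] at h10
                        simp [Q0] at h10
                    | w :: w' :: WB', _ =>
                        rw [show wraps (w :: w' :: WB') (atF r) =
                          allF w (allF w' (wraps WB' (atF r))) from rfl,
                          capp_allF, capp_allF] at hF2
                        have h8 : allF z0 (atF z0) = allF w (allF w' _) := hF2
                        injection h8 with h9 h10
                        simp at h10
                | arrF a₃ τ₄ =>
                    -- CASE 5
                    rw [show capp σ₀ (arrF a₃ τ₄) =
                      arrF (capp σ₀ a₃) (capp σ₀ τ₄) from capp_arrF _ _ _,
                      ps_arrF, capp_arrF] at h3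
                    subst h3
                    obtain ⟨τ₅, hτ₅, h4⟩ := steps_arr (by rfl) hSb
                    rw [capp_arrF] at h4
                    injection h4 with h5 h6
                    rw [capp_arrF] at h6
                    subst h6
                    obtain ⟨τ₆, hτ₆, h7⟩ := steps_arr (by rfl) hSc
                    rw [capp_arrF] at h7
                    obtain ⟨Z1, Z2, hZBeq⟩ : ∃ Z1 Z2, ZB = arrF Z1 Z2 := ⟨_, _, h7⟩
                    subst hZBeq
                    match WB, hWB with
                    | [], _ =>
                        have h8 : rootOf (capp σ₂ (arrF Z1 Z2)) = .allK z0 := by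
                          rw [show capp σ₂ (wraps [] (arrF Z1 Z2)) =
                            capp σ₂ (arrF Z1 Z2) from rfl] at hF2
                          rw [← hF2]; rfl
                        rw [rootOf_capp_arr] at h8
                        cases h8
                    | [w], _ =>
                        rw [show wraps [w] (arrF Z1 Z2) = allF w (arrF Z1 Z2)
                          from rfl, capp_allF] at hF2
                        have h8 : allF z0 (atF z0) =
                            allF w (capp (filt w σ₂) (arrF Z1 Z2)) := hF2
                        injection h8 with h9 h10
                        rw [capp_arrF] at h10
                        cases h10
                    | w :: w' :: WB', _ =>
                        rw [show wraps (w :: w' :: WB') (arrF Z1 Z2) =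
                          allF w (allF w' (wraps WB' (arrF Z1 Z2))) from rfl,
                          capp_allF, capp_allF] at hF2
                        have h8 : allF z0 (atF z0) = allF w (allF w' _) := hF2
                        injection h8 with h9 h10
                        simp at h10

/-- `T = λν λf ((ν)(T₁)νf)(λx x)` has type `∀x{N^⊥[x] → ¬¬N[x]}` in AF2⊥,
although it is not typable of type `∀x{N*[x] → ¬¬N[x]}` in AF2. -/
theorem Tnu_typing (E : Set (Tm × Tm)) (hE : Adequate E) :
    DerB E [] Tnu specBot ∧ ¬ DerA E [] Tnu specStar := ⟨posMain, not_derA E⟩
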